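/- arXiv:1207.3650 — 10 statements merged into one kernel-verified Lean document; each statement's English description precedes it below -/
import Mathlib

section
/- If ζ = (ζ_r)_{r∈𝓡} is a max-min fair allocation for the state x, then for every route r with x_r > 0 one has ζ_r ≥ ζ^min_r(x) = min_{ℓ∈r} C_ℓ/X_ℓ; that is, the min policy is sub-optimal with respect to max-min fairness in every state. -/
/-!
Given a route `r` with `x_r > 0`, fairness provides a saturated link `ℓ ∈ r` on which `r` has the
largest rate among active routes. Saturation writes `C_ℓ = ∑_{r' ∋ ℓ} x_{r'} ζ_{r'}`, so `C_ℓ / X_ℓ`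
is a load-weighted average of rates that are all at most `ζ_r`; the minimum over the links of `r`
is smaller still.
-/

open Finset

theorem Finset.sum_natCast_mul_le_sum_mul {ι K : Type*} [Semiring K] [PartialOrder K]
    [IsOrderedRing K] (s : Finset ι) (x : ι → ℕ) (ζ : ι → K) {m : K}
    (hle : ∀ i ∈ s, 0 < x i → ζ i ≤ m) :
    ∑ i ∈ s, (x i : K) * ζ i ≤ (∑ i ∈ s, (x i : K)) * m := by
  rw [sum_mul]
  refine sum_le_sum fun i hi => ?_
  rcases (x i).eq_zero_or_pos with hx | hx
  · simp [hx]
  · exact mul_le_mul_of_nonneg_left (hle i hi hx) (Nat.cast_nonneg _)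

theorem Finset.sum_natCast_mul_div_sum_le {ι K : Type*} [Field K] [LinearOrder K]
    [IsStrictOrderedRing K] {s : Finset ι} {x : ι → ℕ} {ζ : ι → K} {m : K}
    (hs : ∃ i ∈ s, 0 < x i) (hle : ∀ i ∈ s, 0 < x i → ζ i ≤ m) :
    (∑ i ∈ s, (x i : K) * ζ i) / ∑ i ∈ s, (x i : K) ≤ m := by
  obtain ⟨j, hj, hxj⟩ := hs
  have hload : 0 < ∑ i ∈ s, (x i : K) :=
    sum_pos' (fun i _ => Nat.cast_nonneg _) ⟨j, hj, Nat.cast_pos.mpr hxj⟩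
  rw [div_le_iff₀ hload, mul_comm]
  exact sum_natCast_mul_le_sum_mul s x ζ hle

theorem statement_1_general {L R : Type*} [Fintype R] [DecidableEq L]
    (route : R → Finset L) (hroute : ∀ r, (route r).Nonempty)
    (C : L → ℝ)
    (x : R → ℕ)
    (ζ : R → ℝ)
    (hfair : ∀ r, ∀ hr : 0 < x r, ∃ ℓ, ∃ hℓ : ℓ ∈ route r,
      (∑ r' ∈ Finset.univ.filter (fun r' => ℓ ∈ route r'), (x r' : ℝ) * ζ r' = C ℓ) ∧
      ζ r = (Finset.univ.filter (fun r' => ℓ ∈ route r' ∧ 0 < x r')).sup'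
              ⟨r, Finset.mem_filter.mpr ⟨Finset.mem_univ r, hℓ, hr⟩⟩ ζ) :
    ∀ r, 0 < x r →
      (route r).inf' (hroute r)
          (fun ℓ => C ℓ /
            (∑ r' ∈ Finset.univ.filter (fun r' => ℓ ∈ route r'), (x r' : ℝ))) ≤ ζ r := by
  intro r hr
  obtain ⟨ℓ, hℓ, hsaturated, hmax⟩ := hfair r hr
  refine (inf'_le _ hℓ).trans ?_
  rw [← hsaturated]
  refine sum_natCast_mul_div_sum_le ⟨r, mem_filter.mpr ⟨mem_univ r, hℓ⟩, hr⟩ fun i hi hxi => ?_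
  exact hmax ▸ le_sup' ζ (mem_filter.mpr ⟨mem_univ i, (mem_filter.mp hi).2, hxi⟩)

/-- If `ζ` is a max-min fair allocation for the state `x` of a
best-effort network, then for every route `r` with `x_r > 0` one has
`ζ_r ≥ ζ^min_r(x) = min_{ℓ ∈ r} C_ℓ / X_ℓ`: the min policy is sub-optimal with
respect to max-min fairness in every state. Here `X_ℓ = ∑_{r ∋ ℓ} x_r`, and a
max-min fair allocation is a nonnegative vector `ζ` satisfying the capacity
constraints `∑_{r ∋ ℓ} x_r ζ_r ≤ C_ℓ` such that every route `r` with `x_r > 0`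
has a link `ℓ ∈ r` with `∑_{r' ∋ ℓ} x_{r'} ζ_{r'} = C_ℓ` and
`ζ_r = max_{r' ∋ ℓ, x_{r'} > 0} ζ_{r'}`. -/
theorem statement_1 {L R : Type*} [Fintype L] [Fintype R] [DecidableEq L]
    (route : R → Finset L) (hroute : ∀ r, (route r).Nonempty)
    (C : L → ℝ) (hC : ∀ ℓ, 0 < C ℓ)
    (x : R → ℕ)
    (ζ : R → ℝ) (hζnonneg : ∀ r, 0 ≤ ζ r)
    (hcap : ∀ ℓ, ∑ r ∈ Finset.univ.filter (fun r => ℓ ∈ route r), (x r : ℝ) * ζ r ≤ C ℓ)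
    (hfair : ∀ r, ∀ hr : 0 < x r, ∃ ℓ, ∃ hℓ : ℓ ∈ route r,
      (∑ r' ∈ Finset.univ.filter (fun r' => ℓ ∈ route r'), (x r' : ℝ) * ζ r' = C ℓ) ∧
      ζ r = (Finset.univ.filter (fun r' => ℓ ∈ route r' ∧ 0 < x r')).sup'
              ⟨r, Finset.mem_filter.mpr ⟨Finset.mem_univ r, hℓ, hr⟩⟩ ζ) :
    ∀ r, 0 < x r →
      (route r).inf' (hroute r)
          (fun ℓ => C ℓ /
            (∑ r' ∈ Finset.univ.filter (fun r' => ℓ ∈ route r'), (x r' : ℝ))) ≤ ζ r :=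
  statement_1_general route hroute C x ζ hfair
end

section
/- For every state x of a best-effort network, the max-min fair allocation is unique on active routes: if ζ and ζ' are both max-min fair allocations for x, then ζ_r = ζ'_r for every route r with x_r > 0. -/
/-!
Suppose two max-min fair allocations `ζ`, `ζ'` disagree on some active route, and among the
active routes where they disagree pick `r₀` minimising `min (ζ r₀) (ζ' r₀)`; say
`ζ r₀ < ζ' r₀`. On the saturated link `ℓ` at which `ζ r₀` is maximal for `ζ`, the feasible
`ζ'` cannot carry more than `ζ` does, so some active route `r` through `ℓ` has
`ζ' r < ζ r ≤ ζ r₀`. Then `r` is a disagreement with smaller minimum, a contradiction.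
-/

open Finset

lemma Finset.exists_pos_lt_of_sum_mul_le {ι : Type*} {s : Finset ι} {w f g : ι → ℝ}
    (hw : ∀ i ∈ s, 0 ≤ w i) (hsum : ∑ i ∈ s, w i * g i ≤ ∑ i ∈ s, w i * f i)
    {i₀ : ι} (hi₀ : i₀ ∈ s) (hw₀ : 0 < w i₀) (hlt : f i₀ < g i₀) :
    ∃ i ∈ s, 0 < w i ∧ g i < f i := by
  by_contra! hle
  refine hsum.not_gt (sum_lt_sum (fun i hi => ?_) ⟨i₀, hi₀, mul_lt_mul_of_pos_left hlt hw₀⟩)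
  rcases (hw i hi).eq_or_lt with hzero | hpos
  · simp [← hzero]
  · exact mul_le_mul_of_nonneg_left (hle i hi hpos) hpos.le

namespace BestEffort

variable {L R : Type*} [Fintype R] [DecidableEq L]

def load (route : R → Finset L) (x : R → ℕ) (ζ : R → ℝ) (ℓ : L) : ℝ :=
  ∑ r ∈ univ.filter (fun r => ℓ ∈ route r), (x r : ℝ) * ζ r

def IsBottleneck (route : R → Finset L) (C : L → ℝ) (x : R → ℕ) (ζ : R → ℝ) (r : R) (ℓ : L) :
    Prop :=
  ℓ ∈ route r ∧ load route x ζ ℓ = C ℓ ∧ ∀ r', ℓ ∈ route r' → 0 < x r' → ζ r' ≤ ζ r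

lemma exists_isBottleneck {route : R → Finset L} {C : L → ℝ} {x : R → ℕ} {ζ : R → ℝ} {r : R}
    (hr : 0 < x r)
    (hfair : ∃ ℓ, ∃ hℓ : ℓ ∈ route r,
      (∑ r' ∈ univ.filter (fun r' => ℓ ∈ route r'), (x r' : ℝ) * ζ r' = C ℓ) ∧
      ζ r = (univ.filter (fun r' => ℓ ∈ route r' ∧ 0 < x r')).sup'
              ⟨r, mem_filter.mpr ⟨mem_univ r, hℓ, hr⟩⟩ ζ) :
    ∃ ℓ, IsBottleneck route C x ζ r ℓ := by
  obtain ⟨ℓ, hℓ, hsat, hmax⟩ := hfair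
  refine ⟨ℓ, hℓ, hsat, fun r' hℓ' hr' => ?_⟩
  rw [hmax]
  exact le_sup' ζ (mem_filter.mpr ⟨mem_univ r', hℓ', hr'⟩)

lemma exists_lt_of_isBottleneck {route : R → Finset L} {C : L → ℝ} {x : R → ℕ}
    {ζ ζ' : R → ℝ} {r₀ : R} {ℓ : L} (hcap' : ∀ ℓ, load route x ζ' ℓ ≤ C ℓ)
    (hb : IsBottleneck route C x ζ r₀ ℓ) (hr₀ : 0 < x r₀) (hlt : ζ r₀ < ζ' r₀) :
    ∃ r, 0 < x r ∧ ζ' r < ζ r ∧ ζ r ≤ ζ r₀ := by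
  obtain ⟨hℓ, hsat, hmax⟩ := hb
  have hload : load route x ζ' ℓ ≤ load route x ζ ℓ := hsat ▸ hcap' ℓ
  obtain ⟨r, hr, hx, hlt'⟩ := exists_pos_lt_of_sum_mul_le (fun r _ => Nat.cast_nonneg (x r))
    hload (mem_filter.mpr ⟨mem_univ r₀, hℓ⟩) (Nat.cast_pos.mpr hr₀) hlt
  have hℓr := (mem_filter.mp hr).2
  exact ⟨r, Nat.cast_pos.mp hx, hlt', hmax r hℓr (Nat.cast_pos.mp hx)⟩

lemma le_of_isBottleneck_of_forall_min_le {route : R → Finset L} {C : L → ℝ} {x : R → ℕ}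
    {ζ ζ' : R → ℝ} {r₀ : R} {ℓ : L} (hcap' : ∀ ℓ, load route x ζ' ℓ ≤ C ℓ)
    (hb : IsBottleneck route C x ζ r₀ ℓ) (hr₀ : 0 < x r₀)
    (hmin : ∀ r, 0 < x r → ζ r ≠ ζ' r → min (ζ r₀) (ζ' r₀) ≤ min (ζ r) (ζ' r)) :
    ζ' r₀ ≤ ζ r₀ := by
  by_contra! hlt
  obtain ⟨r, hx, hlt', hle⟩ := exists_lt_of_isBottleneck hcap' hb hr₀ hlt
  have := hmin r hx hlt'.ne'
  rw [min_eq_left hlt.le] at this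
  linarith [min_le_right (ζ r) (ζ' r)]

end BestEffort

open BestEffort in
theorem statement_3_general {L R : Type*} [Fintype R] [DecidableEq L]
    (route : R → Finset L)
    (C : L → ℝ)
    (x : R → ℕ)
    (ζ ζ' : R → ℝ)
    (hcap : ∀ ℓ, ∑ r ∈ Finset.univ.filter (fun r => ℓ ∈ route r), (x r : ℝ) * ζ r ≤ C ℓ)
    (hcap' : ∀ ℓ, ∑ r ∈ Finset.univ.filter (fun r => ℓ ∈ route r), (x r : ℝ) * ζ' r ≤ C ℓ)
    (hfair : ∀ r, ∀ hr : 0 < x r, ∃ ℓ, ∃ hℓ : ℓ ∈ route r,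
      (∑ r' ∈ Finset.univ.filter (fun r' => ℓ ∈ route r'), (x r' : ℝ) * ζ r' = C ℓ) ∧
      ζ r = (Finset.univ.filter (fun r' => ℓ ∈ route r' ∧ 0 < x r')).sup'
              ⟨r, Finset.mem_filter.mpr ⟨Finset.mem_univ r, hℓ, hr⟩⟩ ζ)
    (hfair' : ∀ r, ∀ hr : 0 < x r, ∃ ℓ, ∃ hℓ : ℓ ∈ route r,
      (∑ r' ∈ Finset.univ.filter (fun r' => ℓ ∈ route r'), (x r' : ℝ) * ζ' r' = C ℓ) ∧
      ζ' r = (Finset.univ.filter (fun r' => ℓ ∈ route r' ∧ 0 < x r')).sup'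
              ⟨r, Finset.mem_filter.mpr ⟨Finset.mem_univ r, hℓ, hr⟩⟩ ζ') :
    ∀ r, 0 < x r → ζ r = ζ' r := by
  classical
  by_contra! hdiff
  obtain ⟨r₁, hx₁, hne₁⟩ := hdiff
  obtain ⟨r₀, hr₀, hmin⟩ := exists_min_image (univ.filter (fun r => 0 < x r ∧ ζ r ≠ ζ' r))
    (fun r => min (ζ r) (ζ' r)) ⟨r₁, by simp [hx₁, hne₁]⟩
  obtain ⟨hx₀, hne₀⟩ := (mem_filter.mp hr₀).2
  have hmin : ∀ r, 0 < x r → ζ r ≠ ζ' r → min (ζ r₀) (ζ' r₀) ≤ min (ζ r) (ζ' r) :=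
    fun r hx hne => hmin r (by simp [hx, hne])
  obtain ⟨ℓ, hb⟩ := exists_isBottleneck hx₀ (hfair r₀ hx₀)
  obtain ⟨ℓ', hb'⟩ := exists_isBottleneck hx₀ (hfair' r₀ hx₀)
  refine hne₀ (le_antisymm ?_ ?_)
  · exact le_of_isBottleneck_of_forall_min_le hcap hb' hx₀
      (fun r hx hne => by simpa only [min_comm] using hmin r hx hne.symm)
  · exact le_of_isBottleneck_of_forall_min_le hcap' hb hx₀ hmin

/-- For every state `x` of a best-effort network, the max-min fair
allocation is unique on active routes: if `ζ` and `ζ'` are both max-min fair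
allocations for `x`, then `ζ_r = ζ'_r` for every route `r` with `x_r > 0`. -/
theorem statement_3 {L R : Type*} [Fintype L] [Fintype R] [DecidableEq L]
    (route : R → Finset L) (hroute : ∀ r, (route r).Nonempty)
    (C : L → ℝ) (hC : ∀ ℓ, 0 < C ℓ)
    (x : R → ℕ)
    (ζ ζ' : R → ℝ)
    (hζnonneg : ∀ r, 0 ≤ ζ r) (hζ'nonneg : ∀ r, 0 ≤ ζ' r)
    (hcap : ∀ ℓ, ∑ r ∈ Finset.univ.filter (fun r => ℓ ∈ route r), (x r : ℝ) * ζ r ≤ C ℓ)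
    (hcap' : ∀ ℓ, ∑ r ∈ Finset.univ.filter (fun r => ℓ ∈ route r), (x r : ℝ) * ζ' r ≤ C ℓ)
    (hfair : ∀ r, ∀ hr : 0 < x r, ∃ ℓ, ∃ hℓ : ℓ ∈ route r,
      (∑ r' ∈ Finset.univ.filter (fun r' => ℓ ∈ route r'), (x r' : ℝ) * ζ r' = C ℓ) ∧
      ζ r = (Finset.univ.filter (fun r' => ℓ ∈ route r' ∧ 0 < x r')).sup'
              ⟨r, Finset.mem_filter.mpr ⟨Finset.mem_univ r, hℓ, hr⟩⟩ ζ)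
    (hfair' : ∀ r, ∀ hr : 0 < x r, ∃ ℓ, ∃ hℓ : ℓ ∈ route r,
      (∑ r' ∈ Finset.univ.filter (fun r' => ℓ ∈ route r'), (x r' : ℝ) * ζ' r' = C ℓ) ∧
      ζ' r = (Finset.univ.filter (fun r' => ℓ ∈ route r' ∧ 0 < x r')).sup'
              ⟨r, Finset.mem_filter.mpr ⟨Finset.mem_univ r, hℓ, hr⟩⟩ ζ') :
    ∀ r, 0 < x r → ζ r = ζ' r :=
  statement_3_general route C x ζ ζ' hcap hcap' hfair hfair'
end

section
/- Let x be a nonzero state of a best-effort network with traffic parameters (λ_r, σ_r) and ρ_M > 0. Then for every route r with x_r > 0, the service rate under the min policy satisfies (x_r/σ_r) · min_{ℓ∈r} C_ℓ/X_ℓ ≥ (λ_r/ρ_M) · x*_r/x*_M, where x*_r := x_r/(λ_r σ_r) and x*_M := max_{r'} x*_{r'}. (The proof uses X_ℓ = Σ_{r∋ℓ} λ_r σ_r x*_r ≤ ρ_ℓ C_ℓ max_{r∋ℓ} x*_r ≤ ρ_M C_ℓ x*_M.) -/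
/-!
Write `x_r = λ_r σ_r x*_r ≤ λ_r σ_r x*_M`. Summing over the routes through a link `ℓ` gives
`X_ℓ ≤ (Σ_{r ∋ ℓ} λ_r σ_r) x*_M = ρ_ℓ C_ℓ x*_M ≤ ρ_M C_ℓ x*_M`, so every link of a route `r`
offers `C_ℓ / X_ℓ ≥ 1 / (ρ_M x*_M)`, and `(x_r / σ_r) / (ρ_M x*_M)` is exactly the right-hand side.
-/

open Finset

theorem one_div_mul_le_div_sum {ι : Type*} {s : Finset ι} {a w : ι → ℝ} {c ρ M : ℝ}
    (hc : 0 < c) (hM : 0 ≤ M) (haw : ∀ i ∈ s, a i ≤ M * w i)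
    (hw : 1 / c * ∑ i ∈ s, w i ≤ ρ) (ha : 0 < ∑ i ∈ s, a i) :
    1 / (ρ * M) ≤ c / ∑ i ∈ s, a i := by
  have hw' : ∑ i ∈ s, w i ≤ c * ρ := by rwa [one_div, inv_mul_le_iff₀ hc] at hw
  have hsum : ∑ i ∈ s, a i ≤ c * (ρ * M) :=
    calc ∑ i ∈ s, a i ≤ M * ∑ i ∈ s, w i := by rw [mul_sum]; exact sum_le_sum haw
      _ ≤ M * (c * ρ) := by gcongr
      _ = c * (ρ * M) := by ring
  calc 1 / (ρ * M) = c / (c * (ρ * M)) := by rw [div_mul_cancel_left₀ hc.ne', one_div]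
    _ ≤ c / ∑ i ∈ s, a i := div_le_div_of_nonneg_left hc.le ha hsum

theorem statement_4_general {L R : Type*} [Fintype L] [Fintype R] [Nonempty L] [Nonempty R]
    [DecidableEq L]
    (route : R → Finset L) (hroute : ∀ r, (route r).Nonempty)
    (C : L → ℝ) (hC : ∀ ℓ, 0 < C ℓ)
    (lam σ : R → ℝ) (hlam : ∀ r, 0 < lam r) (hσ : ∀ r, 0 < σ r)
    (x : R → ℕ)
    (ρM : ℝ)
    (hρM : ρM = Finset.univ.sup' Finset.univ_nonempty
      (fun ℓ => (1 / C ℓ) * ∑ r ∈ Finset.univ.filter (fun r => ℓ ∈ route r), lam r * σ r))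
    (xstar : R → ℝ) (hxstar : ∀ r, xstar r = (x r : ℝ) / (lam r * σ r))
    (xM : ℝ) (hxM : xM = Finset.univ.sup' Finset.univ_nonempty xstar) :
    ∀ r, 0 < x r →
      (lam r / ρM) * (xstar r / xM) ≤
        ((x r : ℝ) / σ r) *
          (route r).inf' (hroute r)
            (fun ℓ => C ℓ /
              (∑ r' ∈ Finset.univ.filter (fun r' => ℓ ∈ route r'), (x r' : ℝ))) := by
  intro r hr
  have hxstar_le (r' : R) : xstar r' ≤ xM := hxM ▸ le_sup' xstar (mem_univ r')
  have hxM_pos : 0 < xM := by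
    refine lt_of_lt_of_le ?_ (hxstar_le r)
    rw [hxstar]
    have := hlam r; have := hσ r
    positivity
  have hx_le (r' : R) : (x r' : ℝ) ≤ xM * (lam r' * σ r') :=
    (div_le_iff₀ (mul_pos (hlam r') (hσ r'))).1 (hxstar r' ▸ hxstar_le r')
  have hlink (ℓ : L) (hℓ : ℓ ∈ route r) :
      1 / (ρM * xM) ≤
        C ℓ / ∑ r' ∈ univ.filter (fun r' => ℓ ∈ route r'), (x r' : ℝ) :=
    one_div_mul_le_div_sum (hC ℓ) hxM_pos.le (fun r' _ => hx_le r')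
      (hρM ▸ le_sup' (fun ℓ => 1 / C ℓ * ∑ r ∈ univ.filter (fun r => ℓ ∈ route r), lam r * σ r)
        (mem_univ ℓ))
      (sum_pos' (fun _ _ => by positivity) ⟨r, by simpa using hℓ, by exact_mod_cast hr⟩)
  have hσr := hσ r
  calc lam r / ρM * (xstar r / xM) = x r / σ r * (1 / (ρM * xM)) := by
        rw [hxstar]; field_simp [(hlam r).ne']
    _ ≤ _ := by gcongr; exact le_inf' _ _ hlink

/-- Let `x` be a nonzero state of a best-effort network with traffic
parameters `(λ_r, σ_r)` and `ρ_M > 0` (where `ρ_ℓ = (1/C_ℓ) ∑_{r ∋ ℓ} λ_r σ_r` and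
`ρ_M = max_ℓ ρ_ℓ`). Then for every route `r` with `x_r > 0`, the service rate under
the min policy satisfies
`(x_r/σ_r) · min_{ℓ ∈ r} C_ℓ/X_ℓ ≥ (λ_r/ρ_M) · x*_r/x*_M`,
where `x*_r = x_r/(λ_r σ_r)` and `x*_M = max_{r'} x*_{r'}`. -/
theorem statement_4 {L R : Type*} [Fintype L] [Fintype R] [Nonempty L] [Nonempty R]
    [DecidableEq L]
    (route : R → Finset L) (hroute : ∀ r, (route r).Nonempty)
    (C : L → ℝ) (hC : ∀ ℓ, 0 < C ℓ)
    (lam σ : R → ℝ) (hlam : ∀ r, 0 < lam r) (hσ : ∀ r, 0 < σ r)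
    (x : R → ℕ) (hx : ∃ r, 0 < x r)
    (ρM : ℝ)
    (hρM : ρM = Finset.univ.sup' Finset.univ_nonempty
      (fun ℓ => (1 / C ℓ) * ∑ r ∈ Finset.univ.filter (fun r => ℓ ∈ route r), lam r * σ r))
    (hρMpos : 0 < ρM)
    (xstar : R → ℝ) (hxstar : ∀ r, xstar r = (x r : ℝ) / (lam r * σ r))
    (xM : ℝ) (hxM : xM = Finset.univ.sup' Finset.univ_nonempty xstar) :
    ∀ r, 0 < x r →
      (lam r / ρM) * (xstar r / xM) ≤
        ((x r : ℝ) / σ r) *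
          (route r).inf' (hroute r)
            (fun ℓ => C ℓ /
              (∑ r' ∈ Finset.univ.filter (fun r' => ℓ ∈ route r'), (x r' : ℝ))) :=
  statement_4_general route hroute C hC lam σ hlam hσ x ρM hρM xstar hxstar xM hxM
end

section
/- Let x be a nonzero state of a best-effort network with ρ_M > 0, let γ_r > 1 for each route r, let D := Σ_r (λ_r + (x_r/σ_r) min_{ℓ∈r} C_ℓ/X_ℓ) (with the convention that the service term is 0 when x_r = 0). Then the expected one-step change of the Lyapunov function f(x) = Σ_r Σ_{1≤k≤x_r} γ_r^k under the embedded jump chain of the min policy satisfies Σ_r ( γ_r^{x_r+1} λ_r/D − γ_r^{x_r} (x_r/σ_r) min_{ℓ∈r}(C_ℓ/X_ℓ) / D ) ≤ Σ_r (λ_r/(ρ_M D)) γ_r^{x_r} ( ρ_M γ_r − x*_r/x*_M ). -/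
/-!
The bound holds route by route. Writing `x_r = x*_r λ_r σ_r`, every link satisfies
`X_ℓ ≤ x*_M ∑_{r ∋ ℓ} λ_r σ_r ≤ x*_M ρ_M C_ℓ`, so each link of a busy route offers a share
`C_ℓ / X_ℓ ≥ 1 / (ρ_M x*_M)`. Hence the service rate `(x_r/σ_r) min_{ℓ ∈ r} C_ℓ/X_ℓ` is at least
`λ_r x*_r / (ρ_M x*_M)`, and substituting this lower bound into the negative term of the drift
gives the right-hand side.
-/

open Finset

namespace BestEffort

variable {L R : Type*} [Fintype R] [DecidableEq L] (route : R → Finset L)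

def linkCount (x : R → ℕ) (ℓ : L) : ℝ :=
  ∑ r ∈ univ.filter (fun r => ℓ ∈ route r), (x r : ℝ)

lemma linkCount_nonneg (x : R → ℕ) (ℓ : L) : 0 ≤ linkCount route x ℓ :=
  sum_nonneg fun _ _ => Nat.cast_nonneg _

lemma linkCount_pos {x : R → ℕ} {r : R} (hr : 0 < x r) {ℓ : L} (hℓ : ℓ ∈ route r) :
    0 < linkCount route x ℓ :=
  sum_pos' (fun _ _ => Nat.cast_nonneg _) ⟨r, mem_filter.2 ⟨mem_univ r, hℓ⟩, by exact_mod_cast hr⟩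

lemma linkCount_le_mul_sum {x : R → ℕ} {w : R → ℝ} {M : ℝ} (hx : ∀ r, (x r : ℝ) ≤ M * w r)
    (ℓ : L) : linkCount route x ℓ ≤ M * ∑ r ∈ univ.filter (fun r => ℓ ∈ route r), w r := by
  rw [mul_sum]
  exact sum_le_sum fun r _ => hx r

lemma one_div_le_inf'_div_linkCount {C : L → ℝ} {w : R → ℝ} {ρ M : ℝ} (hρ : 0 < ρ) (hM : 0 < M)
    (hload : ∀ ℓ, ∑ r ∈ univ.filter (fun r => ℓ ∈ route r), w r ≤ ρ * C ℓ)
    {x : R → ℕ} (hx : ∀ r, (x r : ℝ) ≤ M * w r) {r : R} (hr : 0 < x r)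
    (hroute : (route r).Nonempty) :
    1 / (ρ * M) ≤ (route r).inf' hroute (fun ℓ => C ℓ / linkCount route x ℓ) := by
  refine le_inf' _ _ fun ℓ hℓ => ?_
  rw [div_le_div_iff₀ (mul_pos hρ hM) (linkCount_pos route hr hℓ)]
  calc 1 * linkCount route x ℓ
      ≤ M * ∑ r ∈ univ.filter (fun r => ℓ ∈ route r), w r := by
        rw [one_mul]; exact linkCount_le_mul_sum route hx ℓ
    _ ≤ M * (ρ * C ℓ) := mul_le_mul_of_nonneg_left (hload ℓ) hM.le
    _ = C ℓ * (ρ * M) := by ring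

lemma service_rate_ge {C : L → ℝ} {lam σ : R → ℝ} (hlam : ∀ r, 0 < lam r) (hσ : ∀ r, 0 < σ r)
    {ρ M : ℝ} (hρ : 0 < ρ)
    (hload : ∀ ℓ, ∑ r ∈ univ.filter (fun r => ℓ ∈ route r), lam r * σ r ≤ ρ * C ℓ)
    {x : R → ℕ} (hM : ∀ r, (x r : ℝ) / (lam r * σ r) ≤ M) (r : R)
    (hroute : (route r).Nonempty) :
    lam r * ((x r : ℝ) / (lam r * σ r) / M) / ρ ≤
      ((x r : ℝ) / σ r) * (route r).inf' hroute (fun ℓ => C ℓ / linkCount route x ℓ) := by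
  rcases (x r).eq_zero_or_pos with hr | hr
  · simp [hr]
  have hw : ∀ r, 0 < lam r * σ r := fun r => mul_pos (hlam r) (hσ r)
  have hMpos : 0 < M := (div_pos (by exact_mod_cast hr) (hw r)).trans_le (hM r)
  have hx : ∀ r, (x r : ℝ) ≤ M * (lam r * σ r) := fun r => (div_le_iff₀ (hw r)).1 (hM r)
  calc lam r * ((x r : ℝ) / (lam r * σ r) / M) / ρ = ((x r : ℝ) / σ r) * (1 / (ρ * M)) := by
        field_simp [(hlam r).ne']
    _ ≤ _ := mul_le_mul_of_nonneg_left
        (one_div_le_inf'_div_linkCount route hρ hMpos hload hx hr hroute)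
        (div_nonneg (Nat.cast_nonneg _) (hσ r).le)

end BestEffort

lemma le_sup'_one_div_mul_mul {L : Type*} [Fintype L] [Nonempty L] {C : L → ℝ} (S : L → ℝ)
    {ℓ : L} (hC : 0 < C ℓ) : S ℓ ≤ univ.sup' univ_nonempty (fun ℓ => 1 / C ℓ * S ℓ) * C ℓ := by
  rw [← div_le_iff₀ hC, ← one_div_mul_eq_div]
  exact le_sup' (fun ℓ => 1 / C ℓ * S ℓ) (mem_univ ℓ)

lemma drift_term_le {g γ lam s q ρ D : ℝ} (hg : 0 ≤ g) (hD : 0 ≤ D) (hρ : 0 < ρ)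
    (hs : lam * q / ρ ≤ s) :
    g * γ * (lam / D) - g * (s / D) ≤ lam / (ρ * D) * g * (ρ * γ - q) := by
  have expand : lam / (ρ * D) * g * (ρ * γ - q) = g * γ * (lam / D) - g * (lam * q / ρ / D) := by
    field_simp
  rw [expand]
  gcongr

theorem statement_5_general {L R : Type*} [Fintype L] [Fintype R] [Nonempty L] [Nonempty R]
    [DecidableEq L]
    (route : R → Finset L) (hroute : ∀ r, (route r).Nonempty)
    (C : L → ℝ) (hC : ∀ ℓ, 0 < C ℓ)
    (lam σ : R → ℝ) (hlam : ∀ r, 0 < lam r) (hσ : ∀ r, 0 < σ r)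
    (x : R → ℕ)
    (γ : R → ℝ) (hγ : ∀ r, 1 < γ r)
    (ρM : ℝ)
    (hρM : ρM = Finset.univ.sup' Finset.univ_nonempty
      (fun ℓ => (1 / C ℓ) * ∑ r ∈ Finset.univ.filter (fun r => ℓ ∈ route r), lam r * σ r))
    (hρMpos : 0 < ρM)
    (xstar : R → ℝ) (hxstar : ∀ r, xstar r = (x r : ℝ) / (lam r * σ r))
    (xM : ℝ) (hxM : xM = Finset.univ.sup' Finset.univ_nonempty xstar)
    (D : ℝ)
    (hD : D = ∑ r, (lam r + ((x r : ℝ) / σ r) *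
      (route r).inf' (hroute r)
        (fun ℓ => C ℓ / (∑ r' ∈ Finset.univ.filter (fun r' => ℓ ∈ route r'), (x r' : ℝ))))) :
    ∑ r, (γ r ^ (x r + 1) * (lam r / D) -
          γ r ^ (x r) * (((x r : ℝ) / σ r) *
            (route r).inf' (hroute r)
              (fun ℓ => C ℓ /
                (∑ r' ∈ Finset.univ.filter (fun r' => ℓ ∈ route r'), (x r' : ℝ))) / D)) ≤
      ∑ r, (lam r / (ρM * D)) * γ r ^ (x r) * (ρM * γ r - xstar r / xM) := by
  have hload : ∀ ℓ, ∑ r ∈ univ.filter (fun r => ℓ ∈ route r), lam r * σ r ≤ ρM * C ℓ :=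
    fun ℓ => hρM ▸ le_sup'_one_div_mul_mul
      (fun ℓ => ∑ r ∈ univ.filter (fun r => ℓ ∈ route r), lam r * σ r) (hC ℓ)
  have hxstar_le : ∀ r, (x r : ℝ) / (lam r * σ r) ≤ xM :=
    fun r => hxstar r ▸ hxM ▸ le_sup' xstar (mem_univ r)
  have hDnonneg : 0 ≤ D := hD ▸ sum_nonneg fun r _ => add_nonneg (hlam r).le <|
    mul_nonneg (div_nonneg (Nat.cast_nonneg _) (hσ r).le) <|
      le_inf' _ _ fun ℓ _ => div_nonneg (hC ℓ).le (BestEffort.linkCount_nonneg route x ℓ)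
  refine sum_le_sum fun r _ => ?_
  rw [pow_succ]
  refine drift_term_le (pow_nonneg (zero_le_one.trans (hγ r).le) _) hDnonneg hρMpos ?_
  rw [hxstar]
  exact BestEffort.service_rate_ge route hlam hσ hρMpos hload hxstar_le r (hroute r)

/-- Let `x` be a nonzero state of a best-effort network with
`ρ_M > 0`, let `γ_r > 1` for each route `r`, and let
`D = ∑_r (λ_r + (x_r/σ_r) min_{ℓ ∈ r} C_ℓ/X_ℓ)` (the service term vanishes
automatically when `x_r = 0`). Then the expected one-step change of the Lyapunov
function `f(x) = ∑_r ∑_{1 ≤ k ≤ x_r} γ_r^k` under the embedded jump chain of the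
min policy satisfies
`∑_r (γ_r^{x_r+1} λ_r/D − γ_r^{x_r} (x_r/σ_r) min_{ℓ ∈ r}(C_ℓ/X_ℓ)/D)
  ≤ ∑_r (λ_r/(ρ_M D)) γ_r^{x_r} (ρ_M γ_r − x*_r/x*_M)`. -/
theorem statement_5 {L R : Type*} [Fintype L] [Fintype R] [Nonempty L] [Nonempty R]
    [DecidableEq L]
    (route : R → Finset L) (hroute : ∀ r, (route r).Nonempty)
    (C : L → ℝ) (hC : ∀ ℓ, 0 < C ℓ)
    (lam σ : R → ℝ) (hlam : ∀ r, 0 < lam r) (hσ : ∀ r, 0 < σ r)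
    (x : R → ℕ) (hx : ∃ r, 0 < x r)
    (γ : R → ℝ) (hγ : ∀ r, 1 < γ r)
    (ρM : ℝ)
    (hρM : ρM = Finset.univ.sup' Finset.univ_nonempty
      (fun ℓ => (1 / C ℓ) * ∑ r ∈ Finset.univ.filter (fun r => ℓ ∈ route r), lam r * σ r))
    (hρMpos : 0 < ρM)
    (xstar : R → ℝ) (hxstar : ∀ r, xstar r = (x r : ℝ) / (lam r * σ r))
    (xM : ℝ) (hxM : xM = Finset.univ.sup' Finset.univ_nonempty xstar)
    (D : ℝ)
    (hD : D = ∑ r, (lam r + ((x r : ℝ) / σ r) *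
      (route r).inf' (hroute r)
        (fun ℓ => C ℓ / (∑ r' ∈ Finset.univ.filter (fun r' => ℓ ∈ route r'), (x r' : ℝ))))) :
    ∑ r, (γ r ^ (x r + 1) * (lam r / D) -
          γ r ^ (x r) * (((x r : ℝ) / σ r) *
            (route r).inf' (hroute r)
              (fun ℓ => C ℓ /
                (∑ r' ∈ Finset.univ.filter (fun r' => ℓ ∈ route r'), (x r' : ℝ))) / D)) ≤
      ∑ r, (lam r / (ρM * D)) * γ r ^ (x r) * (ρM * γ r - xstar r / xM) :=
  statement_5_general route hroute C hC lam σ hlam hσ x γ hγ ρM hρM hρMpos xstar hxstar xM hxM D hD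
end

section
/- Let x be a nonzero state of a best-effort network, let D > 0, γ > 1 and real numbers θ < α with 0 < θ and α < 1, 0 < ρ_M. Then Σ_1 := Σ_{r : x*_r > α x*_M} (λ_r/(ρ_M D)) γ^{x*_r} (θ − x*_r/x*_M) satisfies Σ_1 ≤ (γ^{x*_M}/(ρ_M D)) (θ − α) min_{r∈𝓡} λ_r < 0 (every term of the sum is negative, and the sum is nonempty since it contains any r₀ with x*_{r₀} = x*_M). -/
/-!
Every route in the sum has `x*_r / x*_M > α > θ`, so every term is nonpositive and the sum is at
most the term of a route `r₀` attaining the maximum `x*_M`. That term equals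
`(λ_{r₀}/(ρ_M D)) γ^{x*_M} (θ - 1)`, and `λ_{r₀} (θ - 1) ≤ (θ - α) min_r λ_r` because `θ - 1 < θ - α < 0`.
-/

open Finset

namespace BestEffort

variable {ι : Type*} [Fintype ι] [Nonempty ι]

lemma mul_rpow_mul_sub_div_nonpos {w c γ θ α y M : ℝ} (hw : 0 ≤ w) (hc : 0 ≤ c) (hγ : 0 ≤ γ)
    (hθα : θ ≤ α) (hM : 0 < M) (hy : α * M < y) :
    w / c * γ ^ y * (θ - y / M) ≤ 0 := by
  have hyM : α < y / M := (lt_div_iff₀ hM).2 (by linarith)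
  exact mul_nonpos_of_nonneg_of_nonpos (by positivity) (by linarith)

lemma mul_sub_one_le_mul_inf' (w : ι → ℝ) (hw : ∀ i, 0 < w i) (i : ι) {θ α : ℝ} (hθα : θ ≤ α)
    (hα : α ≤ 1) :
    w i * (θ - 1) ≤ (θ - α) * univ.inf' univ_nonempty w := by
  have hm : 0 < univ.inf' univ_nonempty w := (lt_inf'_iff _).2 fun j _ => hw j
  have hmi : univ.inf' univ_nonempty w ≤ w i := inf'_le _ (mem_univ i)
  nlinarith

theorem sum_filter_lt_sup'_le_mul_inf' (w y : ι → ℝ) (hw : ∀ i, 0 < w i) {c γ θ α : ℝ}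
    (hc : 0 < c) (hγ : 0 < γ) (hθα : θ ≤ α) (hα : α < 1)
    (hM : 0 < univ.sup' univ_nonempty y) :
    ∑ i ∈ univ.filter (fun i => α * univ.sup' univ_nonempty y < y i),
        w i / c * γ ^ y i * (θ - y i / univ.sup' univ_nonempty y) ≤
      γ ^ univ.sup' univ_nonempty y / c * (θ - α) * univ.inf' univ_nonempty w := by
  set M := univ.sup' univ_nonempty y
  obtain ⟨i₀, -, hi₀⟩ := exists_mem_eq_sup' univ_nonempty y
  have hi₀_mem : i₀ ∈ univ.filter (fun i => α * M < y i) :=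
    mem_filter.2 ⟨mem_univ _, hi₀ ▸ by nlinarith⟩
  calc _ ≤ ∑ i ∈ {i₀}, w i / c * γ ^ y i * (θ - y i / M) :=
        sum_le_sum_of_subset_of_nonpos' (singleton_subset_iff.2 hi₀_mem) fun i hi _ =>
          mul_rpow_mul_sub_div_nonpos (hw i).le hc.le hγ.le hθα hM (mem_filter.1 hi).2
    _ = γ ^ M / c * (w i₀ * (θ - 1)) := by
        rw [sum_singleton, ← hi₀, div_self hM.ne']
        ring
    _ ≤ γ ^ M / c * ((θ - α) * univ.inf' univ_nonempty w) :=
        mul_le_mul_of_nonneg_left (mul_sub_one_le_mul_inf' w hw i₀ hθα hα.le) (by positivity)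
    _ = _ := by ring

end BestEffort

theorem statement_6_general {R : Type*} [Fintype R] [Nonempty R]
    (lam σ : R → ℝ) (hlam : ∀ r, 0 < lam r) (hσ : ∀ r, 0 < σ r)
    (x : R → ℕ) (hx : ∃ r, 0 < x r)
    (D γ θ α : ℝ) (hD : 0 < D) (hγ : 1 < γ) (hθα : θ < α) (hα : α < 1)
    (ρM : ℝ)
    (hρMpos : 0 < ρM)
    (xstar : R → ℝ) (hxstar : ∀ r, xstar r = (x r : ℝ) / (lam r * σ r))
    (xM : ℝ) (hxM : xM = Finset.univ.sup' Finset.univ_nonempty xstar) :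
    (∑ r ∈ Finset.univ.filter (fun r => α * xM < xstar r),
        (lam r / (ρM * D)) * γ ^ (xstar r) * (θ - xstar r / xM)) ≤
      (γ ^ xM / (ρM * D)) * (θ - α) * Finset.univ.inf' Finset.univ_nonempty lam ∧
    (γ ^ xM / (ρM * D)) * (θ - α) * Finset.univ.inf' Finset.univ_nonempty lam < 0 := by
  subst hxM
  obtain ⟨r, hr⟩ := hx
  have hxM : 0 < Finset.univ.sup' Finset.univ_nonempty xstar := by
    refine (Finset.lt_sup'_iff _).2 ⟨r, Finset.mem_univ r, ?_⟩
    rw [hxstar]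
    exact div_pos (Nat.cast_pos.2 hr) (mul_pos (hlam r) (hσ r))
  have hρD : 0 < ρM * D := mul_pos hρMpos hD
  have hγ₀ : 0 < γ := zero_lt_one.trans hγ
  refine ⟨BestEffort.sum_filter_lt_sup'_le_mul_inf' lam xstar hlam hρD hγ₀ hθα.le hα hxM, ?_⟩
  have hlam_min : 0 < Finset.univ.inf' Finset.univ_nonempty lam :=
    (Finset.lt_inf'_iff _).2 fun r _ => hlam r
  exact mul_neg_of_neg_of_pos
    (mul_neg_of_pos_of_neg (div_pos (Real.rpow_pos_of_pos hγ₀ _) hρD) (sub_neg.2 hθα)) hlam_min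

/-- Let `x` be a nonzero state of a best-effort network, let `D > 0`,
`γ > 1` and real numbers `θ < α` with `0 < θ`, `α < 1`, and `0 < ρ_M`. Then
`Σ₁ = ∑_{r : x*_r > α x*_M} (λ_r/(ρ_M D)) γ^{x*_r} (θ − x*_r/x*_M)` satisfies
`Σ₁ ≤ (γ^{x*_M}/(ρ_M D)) (θ − α) min_r λ_r < 0`. -/
theorem statement_6 {L R : Type*} [Fintype L] [Fintype R] [Nonempty L] [Nonempty R]
    [DecidableEq L]
    (route : R → Finset L) (hroute : ∀ r, (route r).Nonempty)
    (C : L → ℝ) (hC : ∀ ℓ, 0 < C ℓ)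
    (lam σ : R → ℝ) (hlam : ∀ r, 0 < lam r) (hσ : ∀ r, 0 < σ r)
    (x : R → ℕ) (hx : ∃ r, 0 < x r)
    (D γ θ α : ℝ) (hD : 0 < D) (hγ : 1 < γ) (hθα : θ < α) (hθ : 0 < θ) (hα : α < 1)
    (ρM : ℝ)
    (hρM : ρM = Finset.univ.sup' Finset.univ_nonempty
      (fun ℓ => (1 / C ℓ) * ∑ r ∈ Finset.univ.filter (fun r => ℓ ∈ route r), lam r * σ r))
    (hρMpos : 0 < ρM)
    (xstar : R → ℝ) (hxstar : ∀ r, xstar r = (x r : ℝ) / (lam r * σ r))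
    (xM : ℝ) (hxM : xM = Finset.univ.sup' Finset.univ_nonempty xstar) :
    (∑ r ∈ Finset.univ.filter (fun r => α * xM < xstar r),
        (lam r / (ρM * D)) * γ ^ (xstar r) * (θ - xstar r / xM)) ≤
      (γ ^ xM / (ρM * D)) * (θ - α) * Finset.univ.inf' Finset.univ_nonempty lam ∧
    (γ ^ xM / (ρM * D)) * (θ - α) * Finset.univ.inf' Finset.univ_nonempty lam < 0 :=
  statement_6_general lam σ hlam hσ x hx D γ θ α hD hγ hθα hα ρM hρMpos xstar hxstar xM hxM
end

section
/- Let γ > 1, 0 < θ < α < 1, 0 < ρ_M, and let C > 0, ε > 0 satisfy (θ − α) min_{r} λ_r + γ^{(α−1)C} |𝓡| θ max_{r} λ_r ≤ −ε. Then for every nonzero state x with x*_M > C and every 0 < D ≤ D' := |𝓡|(max_r λ_r + max_r (1/σ_r) · max_ℓ C_ℓ), one has Σ_r (λ_r/(ρ_M D)) γ^{x*_r} (θ − x*_r/x*_M) ≤ −ε γ^{C}/(ρ_M D') < 0. -/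
/-!
Multiply the sum by `ρ_M D` and write `m = x*_M`. A route with `x*_r ≥ θ m`
contributes nothing positive, and any other route contributes at most `θ λ_max γ^{α m}`,
since `x*_r < θ m < α m`. A route `r₀` attaining the maximum contributes
`λ_{r₀} γ^m (θ - 1) ≤ (θ - α) λ_min γ^m`. Factoring out `γ^m` leaves
`(θ - α) λ_min + γ^{(α-1) m} |𝓡| θ λ_max`, which decreases in `m` and is `≤ -ε` at `m = C₀`.
-/

open Finset

lemma mul_rpow_mul_sub_div_le {l γ θ y m : ℝ} (hl : 0 ≤ l) (hγ : 1 ≤ γ) (hθ : 0 ≤ θ)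
    (hm : 0 < m) (hy : 0 ≤ y) :
    l * γ ^ y * (θ - y / m) ≤ l * θ * γ ^ (θ * m) := by
  have hγ0 : 0 < γ := zero_lt_one.trans_le hγ
  by_cases hlarge : θ ≤ y / m
  · calc l * γ ^ y * (θ - y / m) ≤ 0 :=
          mul_nonpos_of_nonneg_of_nonpos (by positivity) (sub_nonpos.2 hlarge)
      _ ≤ l * θ * γ ^ (θ * m) := by positivity
  · have hy' : y ≤ θ * m := ((div_le_iff₀ hm).1 (not_le.1 hlarge).le)
    have hpow : γ ^ y ≤ γ ^ (θ * m) := Real.rpow_le_rpow_of_exponent_le hγ hy'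
    have hfactor : θ - y / m ≤ θ := by linarith [div_nonneg hy hm.le]
    calc l * γ ^ y * (θ - y / m) ≤ l * γ ^ (θ * m) * θ := by gcongr; linarith
      _ = l * θ * γ ^ (θ * m) := by ring

lemma add_mul_rpow_le_neg_mul_rpow {a b γ α ε c m : ℝ} (hγ : 1 ≤ γ) (hα : α ≤ 1)
    (hb : 0 ≤ b) (hε : 0 ≤ ε) (hcm : c ≤ m) (h : a + γ ^ ((α - 1) * c) * b ≤ -ε) :
    a * γ ^ m + b * γ ^ (α * m) ≤ -ε * γ ^ c := by
  have hγ0 : 0 < γ := zero_lt_one.trans_le hγ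
  have hsplit : γ ^ (α * m) = γ ^ ((α - 1) * m) * γ ^ m := by
    rw [← Real.rpow_add hγ0]; ring_nf
  have hdecay : γ ^ ((α - 1) * m) ≤ γ ^ ((α - 1) * c) :=
    Real.rpow_le_rpow_of_exponent_le hγ (by nlinarith)
  calc a * γ ^ m + b * γ ^ (α * m) = (a + γ ^ ((α - 1) * m) * b) * γ ^ m := by
        rw [hsplit]; ring
    _ ≤ -ε * γ ^ m := by gcongr; nlinarith
    _ ≤ -ε * γ ^ c := by
        have : γ ^ c ≤ γ ^ m := Real.rpow_le_rpow_of_exponent_le hγ hcm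
        nlinarith

lemma sum_mul_rpow_mul_sub_div_le {R : Type*} [Fintype R] [Nonempty R] {lam x : R → ℝ}
    {γ θ α m : ℝ} (hlam : ∀ r, 0 ≤ lam r) (hγ : 1 ≤ γ) (hθ : 0 ≤ θ) (hθα : θ ≤ α) (hα : α ≤ 1)
    (hx : ∀ r, 0 ≤ x r) (hm : 0 < m) {r₀ : R} (hr₀ : x r₀ = m) :
    ∑ r, lam r * γ ^ x r * (θ - x r / m) ≤
      (θ - α) * univ.inf' univ_nonempty lam * γ ^ m +
        (Fintype.card R : ℝ) * θ * univ.sup' univ_nonempty lam * γ ^ (α * m) := by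
  classical
  set bound := θ * univ.sup' univ_nonempty lam * γ ^ (α * m)
  have hγ0 : 0 < γ := zero_lt_one.trans_le hγ
  have hbound : 0 ≤ bound :=
    mul_nonneg (mul_nonneg hθ ((hlam r₀).trans (le_sup' lam (mem_univ r₀)))) (by positivity)
  have hterm (r : R) : lam r * γ ^ x r * (θ - x r / m) ≤ bound := by
    calc lam r * γ ^ x r * (θ - x r / m) ≤ lam r * θ * γ ^ (θ * m) :=
          mul_rpow_mul_sub_div_le (hlam r) hγ hθ hm (hx r)
      _ ≤ univ.sup' univ_nonempty lam * θ * γ ^ (α * m) := by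
          have hlmax := le_sup' lam (mem_univ r)
          have hpow : γ ^ (θ * m) ≤ γ ^ (α * m) :=
            Real.rpow_le_rpow_of_exponent_le hγ (by nlinarith)
          gcongr
          exact mul_nonneg ((hlam r).trans hlmax) hθ
      _ = bound := by ring
  have hpeak : lam r₀ * γ ^ x r₀ * (θ - x r₀ / m) ≤
      (θ - α) * univ.inf' univ_nonempty lam * γ ^ m := by
    rw [hr₀, div_self hm.ne']
    have hinf := inf'_le lam (mem_univ r₀)
    have : lam r₀ * (θ - 1) ≤ (θ - α) * univ.inf' univ_nonempty lam := by
      nlinarith [hlam r₀]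
    nlinarith [Real.rpow_pos_of_pos hγ0 m]
  have hrest : ∑ r ∈ univ.erase r₀, lam r * γ ^ x r * (θ - x r / m) ≤
      (Fintype.card R : ℝ) * bound :=
    calc ∑ r ∈ univ.erase r₀, lam r * γ ^ x r * (θ - x r / m)
        ≤ ∑ _r ∈ univ.erase r₀, bound := sum_le_sum fun r _ => hterm r
      _ ≤ ∑ _r : R, bound :=
          sum_le_sum_of_subset_of_nonneg (erase_subset _ _) fun _ _ _ => hbound
      _ = (Fintype.card R : ℝ) * bound := by rw [sum_const, card_univ, nsmul_eq_mul]
  rw [← sum_erase_add _ _ (mem_univ r₀)]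
  linarith

theorem statement_8_general {R : Type*} [Fintype R] [Nonempty R]
    (lam σ : R → ℝ) (hlam : ∀ r, 0 < lam r) (hσ : ∀ r, 0 < σ r)
    (γ θ α : ℝ) (hγ : 1 < γ) (hθ : 0 < θ) (hθα : θ < α) (hα1 : α < 1)
    (ρM : ℝ)
    (hρMpos : 0 < ρM)
    (C₀ ε : ℝ) (hC₀ : 0 < C₀) (hε : 0 < ε)
    (hcond : (θ - α) * Finset.univ.inf' Finset.univ_nonempty lam +
        γ ^ ((α - 1) * C₀) * (Fintype.card R : ℝ) * θ *
          Finset.univ.sup' Finset.univ_nonempty lam ≤ -ε)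
    (x : R → ℕ)
    (xstar : R → ℝ) (hxstar : ∀ r, xstar r = (x r : ℝ) / (lam r * σ r))
    (xM : ℝ) (hxM : xM = Finset.univ.sup' Finset.univ_nonempty xstar)
    (hxMC : C₀ < xM)
    (D D' : ℝ)
    (hDpos : 0 < D) (hDD' : D ≤ D') :
    (∑ r, (lam r / (ρM * D)) * γ ^ (xstar r) * (θ - xstar r / xM)) ≤
        -ε * γ ^ C₀ / (ρM * D') ∧
      -ε * γ ^ C₀ / (ρM * D') < 0 := by
  have hxstar0 (r : R) : 0 ≤ xstar r := by
    rw [hxstar r]; have := hlam r; have := hσ r; positivity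
  obtain ⟨r₀, -, hr₀⟩ := exists_mem_eq_sup' univ_nonempty xstar
  have hb : 0 ≤ (Fintype.card R : ℝ) * θ * univ.sup' univ_nonempty lam :=
    mul_nonneg (by positivity) ((hlam r₀).le.trans (le_sup' lam (mem_univ r₀)))
  have hdrift : ∑ r, lam r * γ ^ xstar r * (θ - xstar r / xM) ≤ -ε * γ ^ C₀ :=
    (sum_mul_rpow_mul_sub_div_le (fun r => (hlam r).le) hγ.le hθ.le hθα.le hα1.le hxstar0
      (hC₀.trans hxMC) (hr₀.symm.trans hxM.symm)).trans
      (add_mul_rpow_le_neg_mul_rpow hγ.le hα1.le hb hε.le hxMC.le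
        (by linear_combination hcond))
  have hρD : 0 < ρM * D := mul_pos hρMpos hDpos
  have hρDD' : ρM * D ≤ ρM * D' := mul_le_mul_of_nonneg_left hDD' hρMpos.le
  have hεγ : 0 < ε * γ ^ C₀ := mul_pos hε (Real.rpow_pos_of_pos (by linarith) C₀)
  have hrescale : ∑ r, (lam r / (ρM * D)) * γ ^ (xstar r) * (θ - xstar r / xM) =
      (∑ r, lam r * γ ^ xstar r * (θ - xstar r / xM)) / (ρM * D) := by
    rw [sum_div]; exact sum_congr rfl fun r _ => by ring
  refine ⟨?_, div_neg_of_neg_of_pos (by linarith) (hρD.trans_le hρDD')⟩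
  rw [hrescale]
  calc (∑ r, lam r * γ ^ xstar r * (θ - xstar r / xM)) / (ρM * D)
      ≤ -ε * γ ^ C₀ / (ρM * D) := div_le_div_of_nonneg_right hdrift hρD.le
    _ ≤ -ε * γ ^ C₀ / (ρM * D') := by
        rw [neg_mul, neg_div, neg_div, neg_le_neg_iff]
        exact div_le_div_of_nonneg_left hεγ.le hρD hρDD'

/-- Let `γ > 1`, `0 < θ < α < 1`, `0 < ρ_M`, and let `C₀ > 0`,
`ε > 0` satisfy `(θ − α) min_r λ_r + γ^{(α−1)C₀} |𝓡| θ max_r λ_r ≤ −ε`. Then for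
every nonzero state `x` with `x*_M > C₀` and every
`0 < D ≤ D' = |𝓡| (max_r λ_r + max_r (1/σ_r) · max_ℓ C_ℓ)`, one has
`∑_r (λ_r/(ρ_M D)) γ^{x*_r} (θ − x*_r/x*_M) ≤ −ε γ^{C₀}/(ρ_M D') < 0`. -/
theorem statement_8 {L R : Type*} [Fintype L] [Fintype R] [Nonempty L] [Nonempty R]
    [DecidableEq L]
    (route : R → Finset L) (hroute : ∀ r, (route r).Nonempty)
    (C : L → ℝ) (hC : ∀ ℓ, 0 < C ℓ)
    (lam σ : R → ℝ) (hlam : ∀ r, 0 < lam r) (hσ : ∀ r, 0 < σ r)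
    (γ θ α : ℝ) (hγ : 1 < γ) (hθ : 0 < θ) (hθα : θ < α) (hα1 : α < 1)
    (ρM : ℝ)
    (hρM : ρM = Finset.univ.sup' Finset.univ_nonempty
      (fun ℓ => (1 / C ℓ) * ∑ r ∈ Finset.univ.filter (fun r => ℓ ∈ route r), lam r * σ r))
    (hρMpos : 0 < ρM)
    (C₀ ε : ℝ) (hC₀ : 0 < C₀) (hε : 0 < ε)
    (hcond : (θ - α) * Finset.univ.inf' Finset.univ_nonempty lam +
        γ ^ ((α - 1) * C₀) * (Fintype.card R : ℝ) * θ *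
          Finset.univ.sup' Finset.univ_nonempty lam ≤ -ε)
    (x : R → ℕ) (hx : ∃ r, 0 < x r)
    (xstar : R → ℝ) (hxstar : ∀ r, xstar r = (x r : ℝ) / (lam r * σ r))
    (xM : ℝ) (hxM : xM = Finset.univ.sup' Finset.univ_nonempty xstar)
    (hxMC : C₀ < xM)
    (D D' : ℝ)
    (hD' : D' = (Fintype.card R : ℝ) *
      (Finset.univ.sup' Finset.univ_nonempty lam +
       Finset.univ.sup' Finset.univ_nonempty (fun r => 1 / σ r) *
       Finset.univ.sup' Finset.univ_nonempty C))
    (hDpos : 0 < D) (hDD' : D ≤ D') :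
    (∑ r, (lam r / (ρM * D)) * γ ^ (xstar r) * (θ - xstar r / xM)) ≤
        -ε * γ ^ C₀ / (ρM * D') ∧
      -ε * γ ^ C₀ / (ρM * D') < 0 :=
  statement_8_general lam σ hlam hσ γ θ α hγ hθ hθα hα1 ρM hρMpos C₀ ε hC₀ hε hcond x xstar hxstar
    xM hxM hxMC D D' hDpos hDD'
end

section
/- Suppose some link ℓ₀ has load ρ_{ℓ₀} > 1. Let x be any state and (ζ_r) any nonnegative bandwidth allocation satisfying the capacity constraints Σ_{r∋ℓ} x_r ζ_r ≤ C_ℓ for all links ℓ, and let D := Σ_r (λ_r + (x_r/σ_r) ζ_r) > 0. Then the expected one-step change of g(x) := Σ_{r∋ℓ₀} σ_r x_r under the jump chain with transition probabilities λ_r/D (for x_r → x_r+1) and (x_r/σ_r)ζ_r/D (for x_r → x_r−1) satisfies Σ_{r∋ℓ₀} σ_r ( λ_r/D − (x_r/σ_r) ζ_r / D ) ≥ (C_{ℓ₀} ρ_{ℓ₀} − C_{ℓ₀})/D > 0. -/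
open Finset

lemma sum_mul_sub_div_eq {R : Type*} (s : Finset R) (lam σ y ζ : R → ℝ) (D : ℝ)
    (hσ : ∀ r ∈ s, σ r ≠ 0) :
    ∑ r ∈ s, σ r * (lam r / D - y r / σ r * ζ r / D) =
      (∑ r ∈ s, lam r * σ r - ∑ r ∈ s, y r * ζ r) / D := by
  rw [← sum_sub_distrib, sum_div]
  refine sum_congr rfl fun r hr => ?_
  field_simp [hσ r hr]

lemma div_le_sum_mul_sub_div {R : Type*} (s : Finset R) (lam σ y ζ : R → ℝ) (c D : ℝ)
    (hσ : ∀ r ∈ s, σ r ≠ 0) (hcap : ∑ r ∈ s, y r * ζ r ≤ c) (hD : 0 < D) :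
    (∑ r ∈ s, lam r * σ r - c) / D ≤ ∑ r ∈ s, σ r * (lam r / D - y r / σ r * ζ r / D) := by
  rw [sum_mul_sub_div_eq s lam σ y ζ D hσ]
  gcongr

theorem statement_9_general {L R : Type*} [Fintype R] [DecidableEq L]
    (route : R → Finset L)
    (C : L → ℝ) (hC : ∀ ℓ, 0 < C ℓ)
    (lam σ : R → ℝ) (hσ : ∀ r, 0 < σ r)
    (ℓ₀ : L) (ρ₀ : ℝ)
    (hρ₀ : ρ₀ = (1 / C ℓ₀) *
      ∑ r ∈ Finset.univ.filter (fun r => ℓ₀ ∈ route r), lam r * σ r)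
    (hρ₀gt : 1 < ρ₀)
    (x : R → ℕ) (ζ : R → ℝ)
    (hcap : ∀ ℓ, ∑ r ∈ Finset.univ.filter (fun r => ℓ ∈ route r), (x r : ℝ) * ζ r ≤ C ℓ)
    (D : ℝ) (hDpos : 0 < D) :
    (C ℓ₀ * ρ₀ - C ℓ₀) / D ≤
        ∑ r ∈ Finset.univ.filter (fun r => ℓ₀ ∈ route r),
          σ r * (lam r / D - ((x r : ℝ) / σ r) * ζ r / D) ∧
      0 < (C ℓ₀ * ρ₀ - C ℓ₀) / D := by
  have hload : C ℓ₀ * ρ₀ = ∑ r ∈ univ.filter (fun r => ℓ₀ ∈ route r), lam r * σ r := by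
    rw [hρ₀, one_div, mul_inv_cancel_left₀ (hC ℓ₀).ne']
  refine ⟨?_, div_pos ?_ hDpos⟩
  · rw [hload]
    exact div_le_sum_mul_sub_div _ lam σ (fun r => x r) ζ (C ℓ₀) D
      (fun r _ => (hσ r).ne') (hcap ℓ₀) hDpos
  · nlinarith [hC ℓ₀]

/-- Suppose some link `ℓ₀` has load `ρ_{ℓ₀} > 1`. Let `x` be any
state and `ζ` any nonnegative bandwidth allocation satisfying the capacity
constraints `∑_{r ∋ ℓ} x_r ζ_r ≤ C_ℓ` for all links `ℓ`, and let
`D = ∑_r (λ_r + (x_r/σ_r) ζ_r) > 0`. Then the expected one-step change of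
`g(x) = ∑_{r ∋ ℓ₀} σ_r x_r` under the embedded jump chain satisfies
`∑_{r ∋ ℓ₀} σ_r (λ_r/D − (x_r/σ_r) ζ_r / D) ≥ (C_{ℓ₀} ρ_{ℓ₀} − C_{ℓ₀})/D > 0`. -/
theorem statement_9 {L R : Type*} [Fintype L] [Fintype R] [DecidableEq L]
    (route : R → Finset L) (hroute : ∀ r, (route r).Nonempty)
    (C : L → ℝ) (hC : ∀ ℓ, 0 < C ℓ)
    (lam σ : R → ℝ) (hlam : ∀ r, 0 < lam r) (hσ : ∀ r, 0 < σ r)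
    (ℓ₀ : L) (ρ₀ : ℝ)
    (hρ₀ : ρ₀ = (1 / C ℓ₀) *
      ∑ r ∈ Finset.univ.filter (fun r => ℓ₀ ∈ route r), lam r * σ r)
    (hρ₀gt : 1 < ρ₀)
    (x : R → ℕ) (ζ : R → ℝ) (hζnonneg : ∀ r, 0 ≤ ζ r)
    (hcap : ∀ ℓ, ∑ r ∈ Finset.univ.filter (fun r => ℓ ∈ route r), (x r : ℝ) * ζ r ≤ C ℓ)
    (D : ℝ) (hD : D = ∑ r, (lam r + ((x r : ℝ) / σ r) * ζ r)) (hDpos : 0 < D) :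
    (C ℓ₀ * ρ₀ - C ℓ₀) / D ≤
        ∑ r ∈ Finset.univ.filter (fun r => ℓ₀ ∈ route r),
          σ r * (lam r / D - ((x r : ℝ) / σ r) * ζ r / D) ∧
      0 < (C ℓ₀ * ρ₀ - C ℓ₀) / D :=
  statement_9_general route C hC lam σ hσ ℓ₀ ρ₀ hρ₀ hρ₀gt x ζ hcap D hDpos
end

section
/- Let L ≥ 2 be an integer and (α_m)_{m≥0} nonnegative reals with Σ_m α_m = 1 and 0 < ᾱ := Σ_{m≥1} m α_m < ∞. Define u_k := k Σ_{k_2,…,k_L ≥ 1} min(1/k, 1/k_2, …, 1/k_L) Π_{i=2}^L k_i α_{k_i} for k ≥ 1. Then u_k admits the simplified form u_k = k Σ_{y=k}^∞ (1/(y(y+1))) ( Σ_{m=1}^{y} m α_m )^{L−1}. -/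
/-!
Telescoping gives `1 / M = ∑_{y ≥ M} 1 / (y (y + 1))` for `M ≥ 1`, so the weight
`min (1/k, 1/k₂, …, 1/k_L) = 1 / max (k, k₂, …, k_L)` is the sum over `y ≥ k` of `1 / (y (y + 1))`
restricted to those `y` with `k₂, …, k_L ≤ y`. Exchanging the two sums (all terms are nonnegative,
so this is done in `ℝ≥0∞`), the sum over `k₂, …, k_L ∈ [1, y]` of `∏ kᵢ α_{kᵢ}` factorizes as
`(∑_{m=1}^y m α_m)^(L-1)`.
-/

open Filter Topology Finset

lemma min_one_div_inf'_eq_one_div_max_sup {ι : Type*} {s : Finset ι} (hs : s.Nonempty) {k : ℕ}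
    (hk : 0 < k) {g : ι → ℕ} (hg : ∀ i ∈ s, 0 < g i) :
    min (1 / (k : ℝ)) (s.inf' hs fun i => 1 / (g i : ℝ)) = 1 / (max k (s.sup g) : ℕ) := by
  obtain ⟨i₀, hi₀, hsup⟩ := exists_mem_eq_sup s hs g
  apply le_antisymm
  · rcases max_choice k (s.sup g) with h | h <;> rw [h]
    · exact min_le_left _ _
    · exact (min_le_right _ _).trans (hsup ▸ inf'_le _ hi₀)
  · refine le_min ?_ (le_inf' _ _ fun i hi => ?_)
    · gcongr
      exact le_max_left _ _
    · have := hg i hi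
      gcongr
      exact (le_sup hi).trans (le_max_right _ _)

lemma hasSum_ite_le_one_div_mul_add_one {M : ℕ} (hM : 0 < M) :
    HasSum (fun y : ℕ => if M ≤ y then 1 / ((y : ℝ) * (y + 1)) else 0) (1 / M) := by
  -- the `y`-th term is `g y - g (y + 1)` for `g y = 1 / max M y`
  set g : ℕ → ℝ := fun y => 1 / (max M y : ℕ)
  have hterm : ∀ y : ℕ, (if M ≤ y then 1 / ((y : ℝ) * (y + 1)) else 0) = g y - g (y + 1) := by
    intro y
    rcases lt_or_ge y M with hy | hy
    · simp only [g, if_neg hy.not_ge, max_eq_left hy.le, max_eq_left (Nat.succ_le_of_lt hy),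
        sub_self]
    · have hy₀ : (0 : ℝ) < y := by exact_mod_cast hM.trans_le hy
      simp only [g, if_pos hy, max_eq_right hy, max_eq_right (hy.trans y.le_succ)]
      field_simp
      push_cast
      ring
  have hg : Tendsto g atTop (𝓝 0) :=
    tendsto_one_div_atTop_nhds_zero_nat.congr' <| by
      filter_upwards [eventually_ge_atTop M] with y hy
      simp only [g, max_eq_right hy]
  have hnn : ∀ y : ℕ, 0 ≤ (if M ≤ y then 1 / ((y : ℝ) * (y + 1)) else 0) := fun y => by
    split_ifs <;> positivity
  rw [hasSum_iff_tendsto_nat_of_nonneg hnn]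
  simp_rw [hterm, sum_range_sub']
  simpa [g] using (tendsto_const_nhds (x := g 0)).sub hg

open scoped ENNReal

lemma ENNReal.ofReal_one_div_eq_tsum_ite_le {M : ℕ} (hM : 0 < M) :
    ENNReal.ofReal (1 / M) =
      ∑' y : ℕ, if M ≤ y then ENNReal.ofReal (1 / ((y : ℝ) * (y + 1))) else 0 := by
  have h := hasSum_ite_le_one_div_mul_add_one hM
  rw [← h.tsum_eq, ENNReal.ofReal_tsum_of_nonneg (fun y => by split_ifs <;> positivity) h.summable]
  simp only [apply_ite ENNReal.ofReal, ENNReal.ofReal_zero]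

lemma tsum_ite_sup_le_prod_eq_pow {ι R : Type*} [Fintype ι] [CommSemiring R]
    [TopologicalSpace R] (f : ℕ → R) (y : ℕ) :
    ∑' κ : ι → ℕ+, (if univ.sup (fun i => (κ i : ℕ)) ≤ y then ∏ i, f (κ i) else 0) =
      (∑ m ∈ Icc 1 y, f m) ^ Fintype.card ι := by
  classical
  set T : Finset ℕ+ := (Icc 1 y).subtype (0 < ·)
  have hmem : ∀ κ : ι → ℕ+,
      univ.sup (fun i => (κ i : ℕ)) ≤ y ↔ κ ∈ Fintype.piFinset fun _ => T := by
    intro κ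
    rw [Finset.sup_le_iff, Fintype.mem_piFinset]
    refine forall_congr' fun i => ?_
    rw [show κ i ∈ T ↔ (κ i : ℕ) ∈ Icc 1 y from mem_subtype, mem_Icc]
    exact ⟨fun h => ⟨(κ i).pos, h (mem_univ i)⟩, fun h _ => h.2⟩
  simp_rw [hmem]
  rw [tsum_eq_sum (s := Fintype.piFinset fun _ => T) (fun κ hκ => if_neg hκ), sum_ite_mem,
    inter_self, sum_prod_piFinset T fun _ m => f m, prod_const, card_univ]
  exact congrArg (· ^ _) (sum_subtype_of_mem f fun m hm => (mem_Icc.1 hm).1)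

lemma ENNReal.tsum_ofReal_one_div_max_sup_mul_prod {ι : Type*} [Fintype ι]
    (f : ℕ → ℝ≥0∞) {k : ℕ} (hk : 0 < k) :
    ∑' κ : ι → ℕ+, ENNReal.ofReal (1 / (max k (univ.sup fun i => (κ i : ℕ)) : ℕ)) *
        ∏ i, f (κ i) =
      ∑' y : ℕ, if k ≤ y then
        ENNReal.ofReal (1 / ((y : ℝ) * (y + 1))) * (∑ m ∈ Icc 1 y, f m) ^ Fintype.card ι
      else 0 := by
  set w : ℕ → ℝ≥0∞ := fun y => ENNReal.ofReal (1 / ((y : ℝ) * (y + 1)))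
  have hsplit : ∀ (κ : ι → ℕ+) (y : ℕ),
      (if max k (univ.sup fun i => (κ i : ℕ)) ≤ y then w y else 0) * ∏ i, f (κ i) =
        if k ≤ y then
          w y * (if univ.sup (fun i => (κ i : ℕ)) ≤ y then ∏ i, f (κ i) else 0)
        else 0 := by
    intro κ y
    by_cases hky : k ≤ y <;> by_cases hsy : univ.sup (fun i => (κ i : ℕ)) ≤ y <;>
      simp [hky, hsy]
  calc _ = ∑' κ : ι → ℕ+, ∑' y : ℕ, if k ≤ y then
          w y * (if univ.sup (fun i => (κ i : ℕ)) ≤ y then ∏ i, f (κ i) else 0) else 0 := by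
        refine tsum_congr fun κ => ?_
        rw [ENNReal.ofReal_one_div_eq_tsum_ite_le (lt_max_of_lt_left hk), ← ENNReal.tsum_mul_right]
        exact tsum_congr (hsplit κ)
    _ = _ := by
        rw [ENNReal.tsum_comm]
        refine tsum_congr fun y => ?_
        split_ifs
        · rw [ENNReal.tsum_mul_left, tsum_ite_sup_le_prod_eq_pow]
        · exact tsum_zero

lemma tsum_eq_tsum_of_tsum_ofReal_eq {α β : Type*} {f : α → ℝ} {g : β → ℝ} (hf : ∀ a, 0 ≤ f a)
    (hg : ∀ b, 0 ≤ g b) (h : ∑' a, ENNReal.ofReal (f a) = ∑' b, ENNReal.ofReal (g b)) :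
    ∑' a, f a = ∑' b, g b := by
  have hf' := ENNReal.tsum_toReal_eq fun a => ENNReal.ofReal_ne_top (r := f a)
  have hg' := ENNReal.tsum_toReal_eq fun b => ENNReal.ofReal_ne_top (r := g b)
  simp only [ENNReal.toReal_ofReal (hf _), ENNReal.toReal_ofReal (hg _)] at hf' hg'
  rw [← hf', ← hg', h]

lemma tsum_one_div_max_sup_mul_prod {ι : Type*} [Fintype ι] {f : ℕ → ℝ} (hf : ∀ m, 0 ≤ f m)
    {k : ℕ} (hk : 0 < k) :
    ∑' κ : ι → ℕ+, 1 / ((max k (univ.sup fun i => (κ i : ℕ)) : ℕ) : ℝ) * ∏ i, f (κ i) =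
      ∑' y : ℕ, if k ≤ y then
        1 / ((y : ℝ) * (y + 1)) * (∑ m ∈ Icc 1 y, f m) ^ Fintype.card ι
      else 0 := by
  refine tsum_eq_tsum_of_tsum_ofReal_eq
    (fun κ => mul_nonneg (by positivity) (prod_nonneg fun i _ => hf _)) (fun y => ?_) ?_
  · split_ifs
    · exact mul_nonneg (by positivity) (pow_nonneg (sum_nonneg fun m _ => hf m) _)
    · exact le_rfl
  convert ENNReal.tsum_ofReal_one_div_max_sup_mul_prod (fun m => ENNReal.ofReal (f m)) hk
    using 3 with κ y
  · rw [ENNReal.ofReal_mul (by positivity), ENNReal.ofReal_prod_of_nonneg fun i _ => hf _]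
  · split_ifs
    · rw [ENNReal.ofReal_mul (by positivity), ENNReal.ofReal_pow (sum_nonneg fun m _ => hf m),
        ENNReal.ofReal_sum_of_nonneg fun m _ => hf m]
    · exact ENNReal.ofReal_zero

/-- Let `L ≥ 2` and `(α_m)_{m≥0}` be nonnegative reals with
`∑_m α_m = 1` and `0 < ᾱ = ∑_{m≥1} m α_m < ∞`. Define, for `k ≥ 1`,
`u_k = k ∑_{k_2,…,k_L ≥ 1} min(1/k, 1/k_2, …, 1/k_L) ∏_{i=2}^L k_i α_{k_i}`.
Then `u_k` admits the simplified form
`u_k = k ∑_{y=k}^∞ (1/(y(y+1))) (∑_{m=1}^{y} m α_m)^{L−1}`. -/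
theorem statement_12 (L : ℕ) (hL : 2 ≤ L) (α : ℕ → ℝ) (hα : ∀ m, 0 ≤ α m)
    (k : ℕ) (hk : 1 ≤ k) :
    (k : ℝ) * ∑' κ : Fin (L - 1) → ℕ+,
        (min (1 / (k : ℝ))
            (Finset.univ.inf' ⟨(⟨0, by omega⟩ : Fin (L - 1)), Finset.mem_univ _⟩
              (fun i => 1 / ((κ i : ℕ) : ℝ)))) *
          ∏ i, ((κ i : ℕ) : ℝ) * α (κ i : ℕ) =
      (k : ℝ) * ∑' y : ℕ, if k ≤ y then
        (1 / ((y : ℝ) * ((y : ℝ) + 1))) *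
          (∑ m ∈ Finset.Icc 1 y, (m : ℝ) * α m) ^ (L - 1) else 0 := by
  have hmin (κ : Fin (L - 1) → ℕ+) :=
    min_one_div_inf'_eq_one_div_max_sup ⟨⟨0, by omega⟩, mem_univ _⟩ hk (g := fun i => (κ i : ℕ))
      fun i _ => (κ i).pos
  congr 1
  simp_rw [hmin]
  simpa only [Fintype.card_fin] using tsum_one_div_max_sup_mul_prod (ι := Fin (L - 1))
    (fun m => mul_nonneg m.cast_nonneg (hα m)) hk
end

section
/- Let L ≥ 2 be an integer and (α_m)_{m≥0} nonnegative reals with Σ_m α_m = 1 and 0 < ᾱ := Σ_{m≥1} m α_m < ∞, and define u_k := k Σ_{k_2,…,k_L ≥ 1} min(1/k, 1/k_2, …, 1/k_L) Π_{i=2}^L k_i α_{k_i} for k ≥ 1. Then the sequence (u_k)_{k≥1} is nondecreasing in k, u_k ≤ ᾱ^{L−1} for all k, and lim_{k→∞} u_k = ᾱ^{L−1}. -/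
/-!
Writing `M κ = min_i 1/κ_i` and `F κ = ∏_i κ_i α_{κ_i}`, multiplying the factor `k` into the
minimum gives `u_k = ∑_κ min(1, k M κ) F κ`. The weights `min(1, k M κ)` lie in `[0, 1]`, increase
with `k` and are eventually `1` for every `κ`, while `∑_κ F κ = ᾱ^{L-1}` by expanding the power of
`ᾱ = ∑_{m ≥ 1} m α_m`; monotonicity, the bound and, by dominated convergence, the limit follow.
-/

open Filter Topology

theorem HasSum.prod_fin_pi {β : Type*} {f : β → ℝ} {s : ℝ} (hf : HasSum f s) (hf0 : 0 ≤ f)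
    (n : ℕ) : HasSum (fun κ : Fin n → β => ∏ i, f (κ i)) (s ^ n) := by
  induction n with
  | zero => simp
  | succ n ih =>
    have hprod0 : 0 ≤ fun κ : Fin n → β => ∏ i, f (κ i) := fun κ =>
      Finset.prod_nonneg fun i _ => hf0 (κ i)
    have hsum := hf.summable.mul_of_nonneg ih.summable hf0 hprod0
    have hprod := HasSum.mul hf ih hsum
    rw [pow_succ', ← (Fin.consEquiv fun _ => β).hasSum_iff]
    refine hprod.congr_fun fun p => ?_
    simp [Fin.consEquiv, Fin.prod_univ_succ]

section WeightedSums

variable {ι : Type*} {F : ι → ℝ} {c : ℕ → ι → ℝ}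

theorem Summable.mul_left_of_nonneg_of_le_one (hF : Summable F) (hF0 : 0 ≤ F) {w : ι → ℝ}
    (hw0 : 0 ≤ w) (hw1 : w ≤ 1) : Summable fun i => w i * F i :=
  hF.of_nonneg_of_le (fun i => mul_nonneg (hw0 i) (hF0 i))
    fun i => mul_le_of_le_one_left (hF0 i) (hw1 i)

theorem tsum_mul_le_tsum_of_le_one (hF : Summable F) (hF0 : 0 ≤ F) {w : ι → ℝ}
    (hw0 : 0 ≤ w) (hw1 : w ≤ 1) : ∑' i, w i * F i ≤ ∑' i, F i :=
  (hF.mul_left_of_nonneg_of_le_one hF0 hw0 hw1).tsum_le_tsum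
    (fun i => mul_le_of_le_one_left (hF0 i) (hw1 i)) hF

variable (hF : Summable F) (hF0 : 0 ≤ F) (hc0 : ∀ k, 0 ≤ c k) (hc1 : ∀ k, c k ≤ 1)
include hF hF0 hc0 hc1

theorem monotone_tsum_mul (hc : Monotone c) : Monotone fun k => ∑' i, c k i * F i :=
  fun _ _ hkl => (hF.mul_left_of_nonneg_of_le_one hF0 (hc0 _) (hc1 _)).tsum_le_tsum
    (fun i => mul_le_mul_of_nonneg_right (hc hkl i) (hF0 i))
    (hF.mul_left_of_nonneg_of_le_one hF0 (hc0 _) (hc1 _))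

theorem tendsto_tsum_mul_of_tendsto_one (hlim : ∀ i, Tendsto (c · i) atTop (𝓝 1)) :
    Tendsto (fun k => ∑' i, c k i * F i) atTop (𝓝 (∑' i, F i)) := by
  refine tendsto_tsum_of_dominated_convergence hF (fun i => ?_) (Eventually.of_forall ?_)
  · simpa using (hlim i).mul_const (F i)
  · intro k i
    rw [Real.norm_of_nonneg (mul_nonneg (hc0 k i) (hF0 i))]
    exact mul_le_of_le_one_left (hF0 i) (hc1 k i)

end WeightedSums

section MinWeights

variable {ι : Type*} {m : ι → ℝ}

theorem mul_tsum_min_one_div_mul {x : ℝ} (hx : 0 < x) (F : ι → ℝ) :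
    x * ∑' i, min (1 / x) (m i) * F i = ∑' i, min 1 (x * m i) * F i := by
  rw [← tsum_mul_left]
  refine tsum_congr fun i => ?_
  rw [← mul_assoc, mul_min_of_nonneg _ _ hx.le, mul_one_div_cancel hx.ne']

theorem min_one_natCast_mul_nonneg (hm : 0 ≤ m) (k : ℕ) : 0 ≤ fun i => min 1 (k * m i) :=
  fun i => le_min zero_le_one (mul_nonneg k.cast_nonneg (hm i))

theorem min_one_natCast_mul_le_one (k : ℕ) : (fun i => min 1 (k * m i)) ≤ 1 :=
  fun _ => min_le_left _ _

theorem monotone_min_one_natCast_mul (hm : 0 ≤ m) :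
    Monotone fun (k : ℕ) i => min 1 (k * m i) :=
  fun _ _ hkl i => min_le_min_left _ <|
    mul_le_mul_of_nonneg_right (Nat.cast_le.mpr hkl) (hm i)

theorem tendsto_min_one_natCast_mul {a : ℝ} (ha : 0 < a) :
    Tendsto (fun k : ℕ => min 1 (k * a)) atTop (𝓝 1) :=
  tendsto_const_nhds.congr' <|
    ((tendsto_natCast_atTop_atTop.atTop_mul_const ha).eventually_ge_atTop 1).mono
      fun _ hk => (min_eq_left hk).symm

end MinWeights

/-- Let `L ≥ 2` and `(α_m)_{m≥0}` be nonnegative reals with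
`∑_m α_m = 1` and `0 < ᾱ = ∑_{m≥1} m α_m < ∞`, and define, for `k ≥ 1`,
`u_k = k ∑_{k_2,…,k_L ≥ 1} min(1/k, 1/k_2, …, 1/k_L) ∏_{i=2}^L k_i α_{k_i}`.
Then `(u_k)_{k≥1}` is nondecreasing, `u_k ≤ ᾱ^{L−1}` for all `k ≥ 1`, and
`lim_{k→∞} u_k = ᾱ^{L−1}`. -/
theorem statement_14 (L : ℕ) (hL : 2 ≤ L) (α : ℕ → ℝ) (hα : ∀ m, 0 ≤ α m)
    (hms : Summable (fun m : ℕ => (m : ℝ) * α m))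
    (u : ℕ → ℝ)
    (hu : ∀ k, 1 ≤ k → u k = (k : ℝ) * ∑' κ : Fin (L - 1) → ℕ+,
      (min (1 / (k : ℝ))
          (Finset.univ.inf' ⟨(⟨0, by omega⟩ : Fin (L - 1)), Finset.mem_univ _⟩
            (fun i => 1 / ((κ i : ℕ) : ℝ)))) *
        ∏ i, ((κ i : ℕ) : ℝ) * α (κ i : ℕ)) :
    (∀ k, 1 ≤ k → u k ≤ u (k + 1)) ∧
    (∀ k, 1 ≤ k → u k ≤ (∑' m : ℕ, (m : ℝ) * α m) ^ (L - 1)) ∧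
    Filter.Tendsto u Filter.atTop (nhds ((∑' m : ℕ, (m : ℝ) * α m) ^ (L - 1))) := by
  set M : (Fin (L - 1) → ℕ+) → ℝ := fun κ =>
    Finset.univ.inf' ⟨⟨0, by omega⟩, Finset.mem_univ _⟩ fun i => 1 / ((κ i : ℕ) : ℝ)
  set F : (Fin (L - 1) → ℕ+) → ℝ := fun κ => ∏ i, ((κ i : ℕ) : ℝ) * α (κ i : ℕ)
  have hM : ∀ κ, 0 < M κ := fun κ =>
    (Finset.lt_inf'_iff _).mpr fun i _ => one_div_pos.mpr (Nat.cast_pos.mpr (κ i).pos)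
  have hmean : HasSum (fun m : ℕ+ => ((m : ℕ) : ℝ) * α m) (∑' m : ℕ, (m : ℝ) * α m) :=
    (hasSum_pnat_iff (f := fun m : ℕ => (m : ℝ) * α m)).mpr (by simpa using hms.hasSum)
  have hF : HasSum F ((∑' m : ℕ, (m : ℝ) * α m) ^ (L - 1)) :=
    hmean.prod_fin_pi (fun m => mul_nonneg m.val.cast_nonneg (hα m)) (L - 1)
  have hF0 : 0 ≤ F := fun κ =>
    Finset.prod_nonneg fun i _ => mul_nonneg (κ i).val.cast_nonneg (hα _)
  have hu_eq : ∀ k, 1 ≤ k → u k = ∑' κ, min 1 (k * M κ) * F κ := fun k hk => by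
    rw [hu k hk, mul_tsum_min_one_div_mul (Nat.cast_pos.mpr hk)]
  have hc0 := min_one_natCast_mul_nonneg fun κ => (hM κ).le
  have hmono := monotone_tsum_mul hF.summable hF0 hc0 min_one_natCast_mul_le_one
    (monotone_min_one_natCast_mul fun κ => (hM κ).le)
  refine ⟨fun k hk => ?_, fun k hk => ?_, ?_⟩
  · rw [hu_eq k hk, hu_eq (k + 1) (by omega)]
    exact hmono k.le_succ
  · rw [hu_eq k hk, ← hF.tsum_eq]
    exact tsum_mul_le_tsum_of_le_one hF.summable hF0 (hc0 k) (min_one_natCast_mul_le_one k)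
  · rw [← hF.tsum_eq]
    refine (tendsto_tsum_mul_of_tendsto_one hF.summable hF0 hc0 min_one_natCast_mul_le_one
      fun κ => tendsto_min_one_natCast_mul (hM κ)).congr' ?_
    filter_upwards [eventually_ge_atTop 1] with k hk using (hu_eq k hk).symm
end

section
/- Let c and v be real functions on (0, ∞), with v three times differentiable and c differentiable, satisfying z c'(z) + c(z) v(z) = 0 and z v''(z) + v'(z) = c(z) for all z > 0. Define w : ℝ → ℝ by w(y) := v(e^y) − 1. Then w satisfies the Blasius equation w'''(y) + w(y) w''(y) = 0 for all y ∈ ℝ. (The paper states this with v(e^y) + 1; the sign −1 is the one making the identity hold for solutions of the stated system.) -/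
open Real

/-! Under `z = exp y` the Euler operator `z d/dz` becomes `d/dy`. Hence `w' = (z v') ∘ exp`,
then `w'' = (z (z v')') ∘ exp = (z c) ∘ exp` by the second equation, and
`w''' = (z (c + z c')) ∘ exp = (z c (1 - v)) ∘ exp` by the first, so `w''' = -w w''`. -/

theorem hasDerivAt_comp_exp {f : ℝ → ℝ} {t : ℝ} (hf : DifferentiableAt ℝ f (exp t)) :
    HasDerivAt (fun s => f (exp s)) (exp t * deriv f (exp t)) t := by
  rw [mul_comm]
  exact hf.hasDerivAt.comp t (hasDerivAt_exp t)

theorem hasDerivAt_exp_mul_comp_exp {f : ℝ → ℝ} {t : ℝ} (hf : DifferentiableAt ℝ f (exp t)) :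
    HasDerivAt (fun s => exp s * f (exp s))
      (exp t * (f (exp t) + exp t * deriv f (exp t))) t := by
  rw [mul_add]
  exact (hasDerivAt_exp t).mul (hasDerivAt_comp_exp hf)

theorem statement_18_general (c v : ℝ → ℝ)
    (hv1 : ∀ z > (0 : ℝ), DifferentiableAt ℝ v z)
    (hv2 : ∀ z > (0 : ℝ), DifferentiableAt ℝ (deriv v) z)
    (hc : ∀ z > (0 : ℝ), DifferentiableAt ℝ c z)
    (heq1 : ∀ z > (0 : ℝ), z * deriv c z + c z * v z = 0)
    (heq2 : ∀ z > (0 : ℝ), z * deriv (deriv v) z + deriv v z = c z) :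
    ∀ y : ℝ,
      deriv (deriv (deriv (fun t => v (Real.exp t) - 1))) y +
        (v (Real.exp y) - 1) * deriv (deriv (fun t => v (Real.exp t) - 1)) y = 0 := by
  intro y
  have hw' : deriv (fun t => v (exp t) - 1) = fun t => exp t * deriv v (exp t) :=
    funext fun t => by
      rw [deriv_sub_const, (hasDerivAt_comp_exp (hv1 _ (exp_pos t))).deriv]
  have hw'' : deriv (fun t => exp t * deriv v (exp t)) = fun t => exp t * c (exp t) :=
    funext fun t => by
      rw [(hasDerivAt_exp_mul_comp_exp (hv2 _ (exp_pos t))).deriv, ← heq2 _ (exp_pos t)]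
      ring
  rw [hw', hw'', (hasDerivAt_exp_mul_comp_exp (hc _ (exp_pos y))).deriv]
  linear_combination exp y * heq1 (exp y) (exp_pos y)

/-- Let `c` and `v` be real functions on `(0, ∞)`, with `v` three
times differentiable and `c` differentiable, satisfying `z c'(z) + c(z) v(z) = 0`
and `z v''(z) + v'(z) = c(z)` for all `z > 0`. Define `w(y) = v(e^y) − 1`. Then `w`
satisfies the Blasius equation `w'''(y) + w(y) w''(y) = 0` for all `y ∈ ℝ`.
(The paper states this with `v(e^y) + 1`; the sign `−1` is the one making the
identity hold for solutions of the stated system.) -/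
theorem statement_18 (c v : ℝ → ℝ)
    (hv1 : ∀ z > (0 : ℝ), DifferentiableAt ℝ v z)
    (hv2 : ∀ z > (0 : ℝ), DifferentiableAt ℝ (deriv v) z)
    (hv3 : ∀ z > (0 : ℝ), DifferentiableAt ℝ (deriv (deriv v)) z)
    (hc : ∀ z > (0 : ℝ), DifferentiableAt ℝ c z)
    (heq1 : ∀ z > (0 : ℝ), z * deriv c z + c z * v z = 0)
    (heq2 : ∀ z > (0 : ℝ), z * deriv (deriv v) z + deriv v z = c z) :
    ∀ y : ℝ,
      deriv (deriv (deriv (fun t => v (Real.exp t) - 1))) y +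
        (v (Real.exp y) - 1) * deriv (deriv (fun t => v (Real.exp t) - 1)) y = 0 :=
  statement_18_general c v hv1 hv2 hc heq1 heq2
end
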